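/- arXiv:1407.0194 — 2 statements merged into one kernel-verified Lean document; each statement's English description precedes it below -/
import Mathlib

section
/- Let α > 1/2 be real, let m be a positive integer with m > α - 1/2, let μ > 0, let t ∈ ℝ, and let σ ∈ {+1, -1}. Assume z := 1/2 - α + it is not an integer. Then ∫₀^∞ s^{it} (sμ)^{1/2 - α} (e^{-σ i μ s} - 1)^m ds/s = e^{-σ i (π/2)(1/2 - α + it)} · μ^{-it} · Γ(1/2 - α + it) · f_m(1/2 - α + it), where f_m(z) = Σ_{k=1}^{m} binom(m,k) (-1)^{m-k} k^{-z}. -/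
/-!
Put `w = σμi` and `z = 1/2 - α + it`. Substituting in the integrand turns the integral into
`μ^(1/2-α)` times the Mellin transform of `(e^(-ws) - 1)^m` at `z`, where `-m < Re z < 0`.
We show that this transform is `Γ(z) w^(-z) f_m(z)`; then `w^(-z) = e^(-σiπz/2) μ^(-z)`.

For `Re w > 0` and `-1 < Re z < 0`, one integration by parts turns `∫ s^(z-1) (e^(-ws) - 1) ds`
into `(w/z) ∫ s^z e^(-ws) ds = (w/z) Γ(z+1) w^(-z-1) = Γ(z) w^(-z)`; the rotated Gamma integral
`∫ s^(ζ-1) e^(-ws) ds = Γ(ζ) w^(-ζ)` follows from the case of real `w` by analytic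
continuation in `w`. Dominated convergence carries this to the boundary `Re w = 0`.
The binomial expansion `(x - 1)^m = ∑_{k ≥ 1} C(m,k) (-1)^(m-k) (x^k - 1)` with `x = e^(-ws)`
gives the claim for `-1 < Re z < 0`, and analytic continuation in `z` extends it to the strip
`-m < Re z < 0`. The continuation is done for the transform divided by `Γ(z)`, which is
holomorphic on the whole strip, so the poles of `Γ` inside it do no harm.
-/

open MeasureTheory Set Real
open Filter Topology Asymptotics Complex

lemma norm_cexp_sub_one_le_norm {u : ℂ} (hu : u.re ≤ 0) : ‖cexp u - 1‖ ≤ ‖u‖ := by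
  have := (convex_halfSpace_re_le (0 : ℝ)).norm_image_sub_le_of_norm_hasDerivWithin_le
    (f := cexp) (C := 1) (fun v _ => (hasDerivAt_exp v).hasDerivWithinAt)
    (fun v hv => by simpa [Complex.norm_exp] using hv) (x := 0) (by simp) hu
  simpa using this

lemma norm_cexp_neg_mul_sub_one_le {w : ℂ} (hw : 0 ≤ w.re) {s : ℝ} (hs : 0 ≤ s) :
    ‖cexp (-(w * s)) - 1‖ ≤ min (‖w‖ * s) 2 := by
  have hre : (-(w * s)).re ≤ 0 := by simpa using mul_nonneg hw hs
  refine le_min ?_ ?_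
  · simpa [abs_of_nonneg hs] using norm_cexp_sub_one_le_norm hre
  · calc ‖cexp (-(w * s)) - 1‖ ≤ ‖cexp (-(w * s))‖ + ‖(1 : ℂ)‖ := norm_sub_le _ _
      _ ≤ 1 + 1 := by gcongr <;> simp [Complex.norm_exp, mul_nonneg hw hs]
      _ = 2 := one_add_one_eq_two

section MinPow

variable {C : ℝ} (m : ℕ)

lemma isBigO_min_mul_pow_atTop (hC : 0 ≤ C) :
    (fun s : ℝ => min (C * s) 2 ^ m) =O[atTop] (· ^ (-(0 : ℝ))) := by
  refine IsBigO.of_bound (2 ^ m) ?_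
  filter_upwards [eventually_ge_atTop 0] with s hs
  have h0 : 0 ≤ min (C * s) 2 := le_min (by positivity) zero_le_two
  simp only [neg_zero, rpow_zero, norm_one, mul_one, norm_pow, norm_of_nonneg h0]
  exact pow_le_pow_left₀ h0 (min_le_right _ _) m

lemma isBigO_min_mul_pow_nhdsGT (hC : 0 ≤ C) :
    (fun s : ℝ => min (C * s) 2 ^ m) =O[𝓝[>] 0] (· ^ (-(-(m : ℝ)))) := by
  refine IsBigO.of_bound (C ^ m) ?_
  filter_upwards [self_mem_nhdsWithin] with s (hs : 0 < s)
  have h0 : 0 ≤ min (C * s) 2 := le_min (by positivity) zero_le_two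
  simp only [neg_neg, rpow_natCast, norm_pow, norm_of_nonneg h0, norm_of_nonneg hs.le, ← mul_pow]
  exact pow_le_pow_left₀ h0 (min_le_left _ _) m

lemma integrableOn_rpow_mul_min_mul_pow (hC : 0 ≤ C) {p : ℝ} (hp₁ : -(m : ℝ) < p)
    (hp₂ : p < 0) :
    IntegrableOn (fun s : ℝ => s ^ (p - 1) * min (C * s) 2 ^ m) (Ioi 0) :=
  mellin_convergent_of_isBigO_scalar
    ((by fun_prop : Continuous fun s : ℝ => min (C * s) 2 ^ m).locallyIntegrable
      |>.locallyIntegrableOn _)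
    (isBigO_min_mul_pow_atTop m hC) hp₂ (isBigO_min_mul_pow_nhdsGT m hC) hp₁

end MinPow

section ExpSubOnePow

variable {w : ℂ} (m : ℕ)

lemma isBigO_cexp_neg_mul_sub_one_pow (hw : 0 ≤ w.re) {l : Filter ℝ}
    (hl : ∀ᶠ s in l, 0 ≤ s) :
    (fun s : ℝ => (cexp (-(w * s)) - 1) ^ m) =O[l] (fun s => min (‖w‖ * s) 2 ^ m) := by
  refine IsBigO.of_norm_eventuallyLE ?_
  filter_upwards [hl] with s hs
  rw [norm_pow]
  exact pow_le_pow_left₀ (norm_nonneg _) (norm_cexp_neg_mul_sub_one_le hw hs) m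

lemma isBigO_cexp_neg_mul_sub_one_pow_atTop (hw : 0 ≤ w.re) :
    (fun s : ℝ => (cexp (-(w * s)) - 1) ^ m) =O[atTop] (· ^ (-(0 : ℝ))) :=
  (isBigO_cexp_neg_mul_sub_one_pow m hw (eventually_ge_atTop 0)).trans
    (isBigO_min_mul_pow_atTop m (norm_nonneg w))

lemma isBigO_cexp_neg_mul_sub_one_pow_nhdsGT (hw : 0 ≤ w.re) :
    (fun s : ℝ => (cexp (-(w * s)) - 1) ^ m) =O[𝓝[>] 0] (· ^ (-(-(m : ℝ)))) :=
  (isBigO_cexp_neg_mul_sub_one_pow m hw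
    (eventually_mem_nhdsWithin.mono fun _ h => le_of_lt h)).trans
    (isBigO_min_mul_pow_nhdsGT m (norm_nonneg w))

lemma locallyIntegrableOn_cexp_neg_mul_sub_one_pow :
    LocallyIntegrableOn (fun s : ℝ => (cexp (-(w * s)) - 1) ^ m) (Ioi 0) :=
  (by fun_prop : Continuous fun s : ℝ => (cexp (-(w * s)) - 1) ^ m).locallyIntegrable
    |>.locallyIntegrableOn _

lemma mellinConvergent_cexp_neg_mul_sub_one_pow (hw : 0 ≤ w.re) {z : ℂ}
    (hz₁ : -(m : ℝ) < z.re) (hz₂ : z.re < 0) :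
    MellinConvergent (fun s : ℝ => (cexp (-(w * s)) - 1) ^ m) z :=
  mellinConvergent_of_isBigO_rpow (locallyIntegrableOn_cexp_neg_mul_sub_one_pow m)
    (isBigO_cexp_neg_mul_sub_one_pow_atTop m hw) hz₂
    (isBigO_cexp_neg_mul_sub_one_pow_nhdsGT m hw) hz₁

lemma differentiableAt_mellin_cexp_neg_mul_sub_one_pow (hw : 0 ≤ w.re) {z : ℂ}
    (hz₁ : -(m : ℝ) < z.re) (hz₂ : z.re < 0) :
    DifferentiableAt ℂ (mellin fun s : ℝ => (cexp (-(w * s)) - 1) ^ m) z :=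
  mellin_differentiableAt_of_isBigO_rpow (locallyIntegrableOn_cexp_neg_mul_sub_one_pow m)
    (isBigO_cexp_neg_mul_sub_one_pow_atTop m hw) hz₂
    (isBigO_cexp_neg_mul_sub_one_pow_nhdsGT m hw) hz₁

end ExpSubOnePow

lemma aestronglyMeasurable_cpow_smul {f : ℝ → ℂ} (hf : Continuous f) (c : ℂ) :
    AEStronglyMeasurable (fun s : ℝ => (s : ℂ) ^ c • f s) (volume.restrict (Ioi 0)) :=
  (ContinuousOn.smul (fun s (hs : 0 < s) => (continuousAt_ofReal_cpow_const _ _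
    (.inr hs.ne')).continuousWithinAt) hf.continuousOn).aestronglyMeasurable measurableSet_Ioi

lemma norm_cexp_neg_mul_ofReal (w : ℂ) (s : ℝ) : ‖cexp (-(w * s))‖ = rexp (-w.re * s) := by
  simp [Complex.norm_exp]

lemma mellinConvergent_cexp_neg_mul {w ζ : ℂ} (hw : 0 < w.re) (hζ : 0 < ζ.re) :
    MellinConvergent (fun s : ℝ => cexp (-(w * s))) ζ := by
  refine mellinConvergent_of_isBigO_rpow_exp (b := 0) hw
    ((by fun_prop : Continuous fun s : ℝ => cexp (-(w * s))).locallyIntegrable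
      |>.locallyIntegrableOn _)
    (IsBigO.of_norm_le fun s => (norm_cexp_neg_mul_ofReal w s).le) ?_ hζ
  refine IsBigO.of_norm_eventuallyLE ?_
  filter_upwards [self_mem_nhdsWithin] with s (hs : 0 < s)
  simpa [norm_cexp_neg_mul_ofReal] using mul_nonneg hw.le hs.le

lemma differentiableAt_mellin_cexp_neg_mul {ζ v : ℂ} (hζ : 0 < ζ.re) (hv : 0 < v.re) :
    DifferentiableAt ℂ (fun u => mellin (fun s : ℝ => cexp (-(u * s))) ζ) v := by
  have hU : {u : ℂ | v.re / 2 < u.re} ∈ 𝓝 v :=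
    (isOpen_lt continuous_const continuous_re).mem_nhds (show v.re / 2 < v.re by linarith)
  refine (hasDerivAt_integral_of_dominated_loc_of_deriv_le (μ := volume.restrict (Ioi 0))
    (F := fun u (s : ℝ) => (s : ℂ) ^ (ζ - 1) • cexp (-(u * s)))
    (F' := fun u (s : ℝ) => -((s : ℂ) ^ (ζ + 1 - 1) • cexp (-(u * s))))
    (bound := fun s : ℝ => ‖(s : ℂ) ^ (ζ + 1 - 1) • cexp (-(v / 2 * s))‖) hU
    (.of_forall fun u => aestronglyMeasurable_cpow_smul (by fun_prop) _)
    (mellinConvergent_cexp_neg_mul hv hζ) (aestronglyMeasurable_cpow_smul (by fun_prop) _).neg ?_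
    (mellinConvergent_cexp_neg_mul (by simpa using hv) (by simp; linarith)).norm
    ?_).2.differentiableAt
  · refine ae_restrict_of_forall_mem measurableSet_Ioi
      fun s (hs : 0 < s) u (hu : v.re / 2 < u.re) => ?_
    simp only [norm_neg, norm_smul, norm_cexp_neg_mul_ofReal]
    refine mul_le_mul_of_nonneg_left (exp_le_exp.2 ?_) (norm_nonneg _)
    have : (v / 2).re = v.re / 2 := by simp
    nlinarith
  · refine ae_restrict_of_forall_mem measurableSet_Ioi fun s (hs : 0 < s) u _ => ?_
    have hpow : (s : ℂ) ^ (ζ + 1 - 1) = (s : ℂ) ^ (ζ - 1) * s := by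
      rw [add_sub_cancel_right, cpow_sub _ _ (ofReal_ne_zero.2 hs.ne'), cpow_one,
        div_mul_cancel₀ _ (ofReal_ne_zero.2 hs.ne')]
    exact ((hasDerivAt_mul_const (s : ℂ)).neg.cexp.const_mul ((s : ℂ) ^ (ζ - 1))).congr_deriv
      (by rw [hpow, smul_eq_mul, Pi.neg_apply]; ring)

theorem mellin_cexp_neg_mul {w ζ : ℂ} (hw : 0 < w.re) (hζ : 0 < ζ.re) :
    mellin (fun s : ℝ => cexp (-(w * s))) ζ = Gamma ζ * w ^ (-ζ) := by
  have hUo : IsOpen {v : ℂ | 0 < v.re} := isOpen_lt continuous_const continuous_re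
  have hF : AnalyticOnNhd ℂ (fun v => mellin (fun s : ℝ => cexp (-(v * s))) ζ)
      {v | 0 < v.re} :=
    DifferentiableOn.analyticOnNhd
      (fun v hv => (differentiableAt_mellin_cexp_neg_mul hζ hv).differentiableWithinAt) hUo
  have hG : AnalyticOnNhd ℂ (fun v => Gamma ζ * v ^ (-ζ)) {v | 0 < v.re} :=
    DifferentiableOn.analyticOnNhd (fun v (hv : 0 < v.re) =>
      ((differentiableAt_id.cpow_const (.inl hv)).const_mul _).differentiableWithinAt) hUo
  have hreal : ∀ᶠ r : ℝ in 𝓝[≠] 1, mellin (fun s : ℝ => cexp (-((r : ℂ) * s))) ζ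
      = Gamma ζ * (r : ℂ) ^ (-ζ) := by
    filter_upwards [nhdsWithin_le_nhds (Ioi_mem_nhds one_pos)] with r (hr : 0 < r)
    simp only [mellin, smul_eq_mul]
    rw [integral_cpow_mul_exp_neg_mul_Ioi hζ hr, mul_comm, one_div,
      inv_cpow _ _ (by simp [arg_ofReal_of_nonneg hr.le, pi_ne_zero.symm]), cpow_neg]
  have hofReal : Tendsto ((↑) : ℝ → ℂ) (𝓝[≠] 1) (𝓝[≠] 1) := by
    simpa using continuous_ofReal.continuousWithinAt.tendsto_nhdsWithin
      (x := 1) (s := {1}ᶜ) (t := {1}ᶜ) fun r hr => by simpa using hr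
  exact hF.eqOn_of_preconnected_of_frequently_eq hG (convex_halfSpace_re_gt 0).isPreconnected
    (show (0 : ℝ) < (1 : ℂ).re by simp) (hofReal.frequently hreal.frequently) hw

lemma tendsto_rpow_nhdsGT_zero {p : ℝ} (hp : 0 < p) :
    Tendsto (fun s : ℝ => s ^ p) (𝓝[>] 0) (𝓝 0) := by
  simpa [zero_rpow hp.ne'] using
    ((continuousAt_rpow_const 0 p (.inr hp.le)).tendsto).mono_left nhdsWithin_le_nhds

section BoundaryTerm

variable {w z : ℂ}

lemma norm_cpow_div_mul_cexp_neg_mul_sub_one_le (hw : 0 ≤ w.re) {s : ℝ} (hs : 0 < s) :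
    ‖(s : ℂ) ^ z / z * (cexp (-(w * s)) - 1)‖
      ≤ s ^ z.re / ‖z‖ * min (‖w‖ * s) 2 := by
  rw [norm_mul, norm_div, norm_cpow_eq_rpow_re_of_pos hs]
  gcongr
  exact norm_cexp_neg_mul_sub_one_le hw hs.le

lemma tendsto_cpow_div_mul_cexp_neg_mul_sub_one_nhdsGT (hw : 0 ≤ w.re) (hz : -1 < z.re) :
    Tendsto (fun s : ℝ => (s : ℂ) ^ z / z * (cexp (-(w * s)) - 1)) (𝓝[>] 0) (𝓝 0) := by
  refine squeeze_zero_norm' (a := fun s => ‖w‖ / ‖z‖ * s ^ (z.re + 1)) ?_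
    (by simpa using (tendsto_rpow_nhdsGT_zero (by linarith)).const_mul (‖w‖ / ‖z‖))
  filter_upwards [self_mem_nhdsWithin] with s (hs : 0 < s)
  calc _ ≤ s ^ z.re / ‖z‖ * min (‖w‖ * s) 2 :=
        norm_cpow_div_mul_cexp_neg_mul_sub_one_le hw hs
    _ ≤ s ^ z.re / ‖z‖ * (‖w‖ * s) := by gcongr; exact min_le_left _ _
    _ = ‖w‖ / ‖z‖ * s ^ (z.re + 1) := by rw [rpow_add hs, rpow_one]; ring

lemma tendsto_cpow_div_mul_cexp_neg_mul_sub_one_atTop (hw : 0 ≤ w.re) (hz : z.re < 0) :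
    Tendsto (fun s : ℝ => (s : ℂ) ^ z / z * (cexp (-(w * s)) - 1)) atTop (𝓝 0) := by
  refine squeeze_zero_norm' (a := fun s => 2 / ‖z‖ * s ^ z.re) ?_
    (by simpa using (tendsto_rpow_neg_atTop (y := -z.re) (by linarith)).const_mul (2 / ‖z‖))
  filter_upwards [eventually_gt_atTop 0] with s hs
  calc _ ≤ s ^ z.re / ‖z‖ * min (‖w‖ * s) 2 :=
        norm_cpow_div_mul_cexp_neg_mul_sub_one_le hw hs
    _ ≤ s ^ z.re / ‖z‖ * 2 := by gcongr; exact min_le_right _ _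
    _ = 2 / ‖z‖ * s ^ z.re := by ring

end BoundaryTerm

theorem mellin_cexp_neg_mul_sub_one_of_re_pos {w z : ℂ} (hw : 0 < w.re) (hz₁ : -1 < z.re)
    (hz₂ : z.re < 0) : mellin (fun s : ℝ => cexp (-(w * s)) - 1) z = Gamma z * w ^ (-z) := by
  have hz0 : z ≠ 0 := fun h => by simp [h] at hz₂
  have hw0 : w ≠ 0 := fun h => by simp [h] at hw
  have hu : ∀ s ∈ Ioi (0 : ℝ),
      HasDerivAt (fun s : ℝ => (s : ℂ) ^ z / z) ((s : ℂ) ^ (z - 1)) s :=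
    fun s (hs : 0 < s) => ((hasDerivAt_ofReal_cpow_const hs.ne' hz0).div_const z).congr_deriv
      (mul_div_cancel_left₀ _ hz0)
  have hv : ∀ s ∈ Ioi (0 : ℝ), HasDerivAt (fun s : ℝ => cexp (-(w * s)) - 1)
      (-w * cexp (-(w * s))) s := fun s _ =>
    ((((hasDerivAt_id (s : ℂ)).const_mul w).neg.cexp.sub_const 1).comp_ofReal).congr_deriv
      (by simp [mul_comm])
  have hexp : MellinConvergent (fun s : ℝ => cexp (-(w * s))) (z + 1) :=
    mellinConvergent_cexp_neg_mul hw (by simp; linarith)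
  have hmellin₁ := mellinConvergent_cexp_neg_mul_sub_one_pow 1 hw.le (by simpa using hz₁) hz₂
  simp only [pow_one, MellinConvergent, smul_eq_mul] at hmellin₁
  have hparts := integral_Ioi_mul_deriv_eq_deriv_mul hu hv
    (IntegrableOn.congr_fun (hexp.const_mul (-w / z)) (fun s _ => by
      simp only [add_sub_cancel_right, smul_eq_mul, Pi.mul_apply]; ring) measurableSet_Ioi)
    hmellin₁ (tendsto_cpow_div_mul_cexp_neg_mul_sub_one_nhdsGT hw.le hz₁)
    (tendsto_cpow_div_mul_cexp_neg_mul_sub_one_atTop hw.le hz₂)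
  have hlhs : ∫ s in Ioi (0 : ℝ), (s : ℂ) ^ z / z * (-w * cexp (-(w * s)))
      = -w / z * mellin (fun s : ℝ => cexp (-(w * s))) (z + 1) := by
    rw [mellin, ← integral_const_mul]
    refine setIntegral_congr_fun measurableSet_Ioi fun s _ => ?_
    simp only [add_sub_cancel_right, smul_eq_mul]
    ring
  rw [hlhs, mellin_cexp_neg_mul hw (by simp; linarith), Gamma_add_one z hz0, sub_zero, zero_sub,
    neg_add', cpow_sub _ _ hw0, cpow_one] at hparts
  simp only [mellin, smul_eq_mul]
  rw [← neg_neg (∫ _ in _, _), ← hparts]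
  field_simp

lemma continuousWithinAt_mellin_cexp_neg_mul_sub_one {z : ℂ} (hz₁ : -1 < z.re)
    (hz₂ : z.re < 0) (w : ℂ) :
    ContinuousWithinAt (fun v => mellin (fun s : ℝ => cexp (-(v * s)) - 1) z)
      {v | 0 ≤ v.re} w := by
  have hnear : ∀ᶠ v in 𝓝[{v | 0 ≤ v.re}] w, ‖v‖ ≤ ‖w‖ + 1 ∧ 0 ≤ v.re := by
    filter_upwards [nhdsWithin_le_nhds (Metric.closedBall_mem_nhds w one_pos),
      self_mem_nhdsWithin] with v hv hv'
    refine ⟨(norm_le_norm_add_norm_sub' v w).trans ?_, hv'⟩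
    simpa [dist_eq_norm] using hv
  refine continuousWithinAt_of_dominated
    (bound := fun s : ℝ => s ^ (z.re - 1) * min ((‖w‖ + 1) * s) 2 ^ 1)
    (.of_forall fun v => aestronglyMeasurable_cpow_smul (by fun_prop) _) ?_
    (integrableOn_rpow_mul_min_mul_pow 1 (by positivity) (by simpa using hz₁) hz₂)
    (.of_forall fun s => by fun_prop)
  filter_upwards [hnear] with v ⟨hv, hv'⟩
  refine ae_restrict_of_forall_mem measurableSet_Ioi fun s (hs : 0 < s) => ?_
  rw [smul_eq_mul, norm_mul, norm_cpow_eq_rpow_re_of_pos hs, pow_one, sub_re, one_re]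
  gcongr
  exact (norm_cexp_neg_mul_sub_one_le hv' hs.le).trans (by gcongr)

theorem mellin_cexp_neg_mul_sub_one {w z : ℂ} (hw : 0 ≤ w.re) (hw0 : w ≠ 0)
    (hz₁ : -1 < z.re) (hz₂ : z.re < 0) :
    mellin (fun s : ℝ => cexp (-(w * s)) - 1) z = Gamma z * w ^ (-z) := by
  have hRHS : ContinuousAt (fun v : ℂ => Gamma z * v ^ (-z)) w :=
    (continuousAt_cpow_const (mem_slitPlane_iff.2 (hw.lt_or_eq.imp id
      fun hre him => hw0 (Complex.ext hre.symm him)))).const_mul _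
  have : (𝓝[{v : ℂ | 0 < v.re}] w).NeBot :=
    mem_closure_iff_nhdsWithin_neBot.1 (by rwa [closure_setOfPred_lt_re])
  refine tendsto_nhds_unique (l := 𝓝[{v : ℂ | 0 < v.re}] w) ?_
    (hRHS.tendsto.mono_left nhdsWithin_le_nhds)
  refine ((continuousWithinAt_mellin_cexp_neg_mul_sub_one hz₁ hz₂ w).mono
    fun v (hv : 0 < v.re) => hv.le).tendsto.congr' ?_
  filter_upwards [self_mem_nhdsWithin] with v hv
  exact mellin_cexp_neg_mul_sub_one_of_re_pos hv hz₁ hz₂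

lemma ofReal_mul_cpow {r : ℝ} (hr : 0 < r) {x : ℂ} (hx : x ≠ 0) (c : ℂ) :
    ((r : ℂ) * x) ^ c = (r : ℂ) ^ c * x ^ c := by
  rw [cpow_def_of_ne_zero (mul_ne_zero (ofReal_ne_zero.2 hr.ne') hx), log_ofReal_mul hr hx,
    add_mul, Complex.exp_add, cpow_def_of_ne_zero (ofReal_ne_zero.2 hr.ne'), ofReal_log hr.le,
    cpow_def_of_ne_zero hx]

open Finset in
lemma sub_one_pow_eq_sum_Icc {R : Type*} [CommRing R] {m : ℕ} (hm : m ≠ 0) (x : R) :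
    (x - 1) ^ m = ∑ k ∈ Icc 1 m, (m.choose k : R) * (-1) ^ (m - k) * (x ^ k - 1) := by
  calc (x - 1) ^ m = (x + -1) ^ m - (1 + -1) ^ m := by simp [zero_pow hm, sub_eq_add_neg]
    _ = ∑ k ∈ range (m + 1), (m.choose k : R) * (-1) ^ (m - k) * (x ^ k - 1) := by
      rw [add_pow, add_pow, ← sum_sub_distrib]
      exact sum_congr rfl fun k _ => by ring
    _ = _ := by
      rw [range_eq_Ico, sum_eq_sum_Ico_succ_bot (Nat.add_one_pos m), zero_add,
        Finset.Ico_add_one_right_eq_Icc]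
      simp

/-- The function `f_m` of the statement. -/
noncomputable def binomialCpowSum (m : ℕ) (z : ℂ) : ℂ :=
  ∑ k ∈ Finset.Icc 1 m, (m.choose k : ℂ) * (-1) ^ (m - k) * (k : ℂ) ^ (-z)

lemma differentiable_binomialCpowSum (m : ℕ) : Differentiable ℂ (binomialCpowSum m) := fun z =>
  DifferentiableAt.fun_sum fun k hk =>
    ((differentiable_neg z).const_cpow (.inl (Nat.cast_ne_zero.2 (by grind)))).const_mul _

theorem mellin_cexp_neg_mul_sub_one_pow_of_neg_one_lt {w z : ℂ} {m : ℕ} (hm : m ≠ 0)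
    (hw : 0 ≤ w.re) (hw0 : w ≠ 0) (hz₁ : -1 < z.re) (hz₂ : z.re < 0) :
    mellin (fun s : ℝ => (cexp (-(w * s)) - 1) ^ m) z
      = Gamma z * w ^ (-z) * binomialCpowSum m z := by
  have hk : ∀ k ∈ Finset.Icc 1 m, (0 : ℝ) < k := fun k hk => Nat.cast_pos.2 (by grind)
  have hkw : ∀ k ∈ Finset.Icc 1 m, 0 ≤ ((k : ℂ) * w).re ∧ (k : ℂ) * w ≠ 0 := fun k hk' =>
    ⟨by simpa using mul_nonneg (hk k hk').le hw,
      mul_ne_zero (by simpa using (hk k hk').ne') hw0⟩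
  have hterm : ∀ k ∈ Finset.Icc 1 m,
      MellinConvergent (fun s : ℝ => cexp (-((k : ℂ) * w * s)) - 1) z := fun k hk => by
    simpa using
      mellinConvergent_cexp_neg_mul_sub_one_pow 1 (hkw k hk).1 (by simpa using hz₁) hz₂
  calc mellin (fun s : ℝ => (cexp (-(w * s)) - 1) ^ m) z
      = ∫ s in Ioi (0 : ℝ), ∑ k ∈ Finset.Icc 1 m, (m.choose k : ℂ) * (-1) ^ (m - k)
          * ((s : ℂ) ^ (z - 1) • (cexp (-((k : ℂ) * w * s)) - 1)) := by
        refine setIntegral_congr_fun measurableSet_Ioi fun s _ => ?_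
        simp only [sub_one_pow_eq_sum_Icc hm, ← Complex.exp_nat_mul, Finset.mul_sum, smul_eq_mul]
        refine Finset.sum_congr rfl fun k _ => ?_
        ring_nf
    _ = ∑ k ∈ Finset.Icc 1 m,
          (m.choose k : ℂ) * (-1) ^ (m - k) * (Gamma z * ((k : ℂ) * w) ^ (-z)) := by
        rw [integral_finsetSum _ fun k hk => (hterm k hk).const_mul _]
        refine Finset.sum_congr rfl fun k hk => ?_
        rw [integral_const_mul,
          ← mellin_cexp_neg_mul_sub_one (hkw k hk).1 (hkw k hk).2 hz₁ hz₂]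
        rfl
    _ = _ := by
        rw [binomialCpowSum, Finset.mul_sum]
        refine Finset.sum_congr rfl fun k hk' => ?_
        rw [show ((k : ℂ) * w) ^ (-z) = (k : ℂ) ^ (-z) * w ^ (-z) by
          simpa using ofReal_mul_cpow (hk k hk') hw0 (-z)]
        ring

lemma Gamma_ne_zero_of_re_mem_Ioo {z : ℂ} (hz₁ : -1 < z.re) (hz₂ : z.re < 0) :
    Gamma z ≠ 0 :=
  Gamma_ne_zero fun n hn => by
    rcases n with _ | n
    · simp [hn] at hz₂
    · simp [hn] at hz₁; linarith [n.cast_nonneg (α := ℝ)]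

theorem mellin_cexp_neg_mul_sub_one_pow {w z : ℂ} {m : ℕ} (hw : 0 ≤ w.re) (hw0 : w ≠ 0)
    (hz₁ : -(m : ℝ) < z.re) (hz₂ : z.re < 0) (hz : ∀ n : ℕ, z ≠ -n) :
    mellin (fun s : ℝ => (cexp (-(w * s)) - 1) ^ m) z
      = Gamma z * w ^ (-z) * binomialCpowSum m z := by
  have hm : m ≠ 0 := by rintro rfl; simp at hz₁; linarith
  set U : Set ℂ := {v | -(m : ℝ) < v.re} ∩ {v | v.re < 0}
  have hUo : IsOpen U :=
    (isOpen_lt continuous_const continuous_re).inter (isOpen_lt continuous_re continuous_const)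
  have hF : AnalyticOnNhd ℂ
      (fun v => mellin (fun s : ℝ => (cexp (-(w * s)) - 1) ^ m) v * (Gamma v)⁻¹) U :=
    DifferentiableOn.analyticOnNhd (fun v hv =>
      ((differentiableAt_mellin_cexp_neg_mul_sub_one_pow m hw hv.1 hv.2).mul
        (differentiable_one_div_Gamma v)).differentiableWithinAt) hUo
  have hG : AnalyticOnNhd ℂ (fun v => w ^ (-v) * binomialCpowSum m v) U :=
    DifferentiableOn.analyticOnNhd (fun v _ => (((differentiable_neg v).const_cpow (.inl hw0)).mul
      (differentiable_binomialCpowSum m v)).differentiableWithinAt) hUo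
  have hnear : ∀ᶠ v in 𝓝 (-1 / 2 : ℂ),
      mellin (fun s : ℝ => (cexp (-(w * s)) - 1) ^ m) v * (Gamma v)⁻¹
        = w ^ (-v) * binomialCpowSum m v := by
    filter_upwards [(isOpen_lt continuous_const continuous_re).mem_nhds
      (show (-1 / 2 : ℂ) ∈ {v : ℂ | (-1 : ℝ) < v.re} by norm_num),
      (isOpen_lt continuous_re continuous_const).mem_nhds
      (show (-1 / 2 : ℂ) ∈ {v : ℂ | v.re < (0 : ℝ)} by norm_num)]
      with v (hv₁ : -1 < v.re) (hv₂ : v.re < 0)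
    have := Gamma_ne_zero_of_re_mem_Ioo hv₁ hv₂
    rw [mellin_cexp_neg_mul_sub_one_pow_of_neg_one_lt hm hw hw0 hv₁ hv₂]
    field_simp
  have hm1 : (1 : ℝ) ≤ m := by exact_mod_cast Nat.one_le_iff_ne_zero.2 hm
  have := hF.eqOn_of_preconnected_of_eventuallyEq hG
    ((convex_halfSpace_re_gt _).inter (convex_halfSpace_re_lt _)).isPreconnected
    (show (-1 / 2 : ℂ) ∈ U from ⟨by norm_num; linarith, by norm_num⟩) hnear
    ⟨hz₁, hz₂⟩
  rw [mul_inv_eq_iff_eq_mul₀ (Gamma_ne_zero hz)] at this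
  rw [this]
  ring

lemma sign_mul_I_cpow {σ : ℝ} (hσ : σ = 1 ∨ σ = -1) (c : ℂ) :
    ((σ : ℂ) * I) ^ c = cexp (σ * I * (π / 2) * c) := by
  rcases hσ with rfl | rfl <;>
  · rw [cpow_def_of_ne_zero (by simp)]
    push_cast
    simp [log_I, log_neg_I]
    ring_nf

lemma setIntegral_cpow_mul_rpow_mul_div_eq_mellin {a t μ : ℝ} (hμ : 0 < μ) (f : ℝ → ℂ) :
    ∫ s in Ioi (0 : ℝ), (s : ℂ) ^ ((t : ℂ) * I) * ((s * μ) ^ a : ℝ) * f s / s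
      = (μ : ℂ) ^ (a : ℂ) * mellin f (a + t * I) := by
  rw [mellin, ← integral_const_mul]
  refine setIntegral_congr_fun measurableSet_Ioi fun s (hs : 0 < s) => ?_
  have hs0 : (s : ℂ) ≠ 0 := ofReal_ne_zero.2 hs.ne'
  rw [mul_rpow hs.le hμ.le, ofReal_mul, ofReal_cpow hs.le, ofReal_cpow hμ.le, smul_eq_mul,
    cpow_sub _ _ hs0, cpow_add _ _ hs0, cpow_one]
  ring

theorem stmt_3_general (α : ℝ) (hα : 1 / 2 < α) (m : ℕ) (hmα : α - 1 / 2 < (m : ℝ))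
    (μ : ℝ) (hμ : 0 < μ) (t : ℝ) (σ : ℝ) (hσ : σ = 1 ∨ σ = -1)
    (hz : ∀ n : ℤ, (1 / 2 : ℂ) - (α : ℂ) + (t : ℂ) * Complex.I ≠ (n : ℂ)) :
    ∫ s in Ioi (0 : ℝ),
        (s : ℂ) ^ ((t : ℂ) * Complex.I) * ((s * μ) ^ (1 / 2 - α) : ℝ) *
          (Complex.exp (-(σ : ℂ) * Complex.I * (μ : ℂ) * (s : ℂ)) - 1) ^ m / (s : ℂ)
      = Complex.exp (-(σ : ℂ) * Complex.I * ((π : ℂ) / 2) *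
            ((1 / 2 : ℂ) - (α : ℂ) + (t : ℂ) * Complex.I)) *
          (μ : ℂ) ^ (-((t : ℂ) * Complex.I)) *
          Complex.Gamma ((1 / 2 : ℂ) - (α : ℂ) + (t : ℂ) * Complex.I) *
          ∑ k ∈ Finset.Icc 1 m,
            (m.choose k : ℂ) * (-1) ^ (m - k) *
              (k : ℂ) ^ (-((1 / 2 : ℂ) - (α : ℂ) + (t : ℂ) * Complex.I)) := by
  set z : ℂ := 1 / 2 - α + t * I
  have hσI : (σ : ℂ) * I ≠ 0 := by rcases hσ with rfl | rfl <;> simp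
  have hzre : z.re = 1 / 2 - α := by simp [z]
  have hμz :
      (μ : ℂ) ^ (-((t : ℂ) * I)) = (μ : ℂ) ^ ((1 / 2 - α : ℝ) : ℂ) * (μ : ℂ) ^ (-z) := by
    rw [← cpow_add _ _ (ofReal_ne_zero.2 hμ.ne')]
    congr 1
    simp only [z]
    push_cast
    ring
  calc _ = (μ : ℂ) ^ ((1 / 2 - α : ℝ) : ℂ)
        * mellin (fun s : ℝ => (cexp (-(μ * (σ * I) * s)) - 1) ^ m) z := by
        rw [setIntegral_cpow_mul_rpow_mul_div_eq_mellin hμ]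
        congr 2
        · funext s; ring_nf
        · push_cast; ring
    _ = _ := by
        rw [mellin_cexp_neg_mul_sub_one_pow (by simp) (mul_ne_zero (ofReal_ne_zero.2 hμ.ne') hσI)
          (by linarith) (by linarith) fun n h => hz (-n) (by simpa using h),
          ofReal_mul_cpow hμ hσI, sign_mul_I_cpow hσ, hμz, binomialCpowSum]
        ring_nf

/-- For `α > 1/2`, a positive integer `m > α - 1/2`, `μ > 0`, `t ∈ ℝ` and
`σ ∈ {+1, -1}`, assuming `z = 1/2 - α + it` is not an integer,
`∫₀^∞ s^(it) (sμ)^(1/2-α) (e^(-σiμs) - 1)^m ds/s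
  = e^(-σi(π/2)(1/2-α+it)) μ^(-it) Γ(1/2-α+it) f_m(1/2-α+it)`,
where `f_m(z) = ∑_{k=1}^m (m choose k) (-1)^(m-k) k^(-z)`. -/
theorem stmt_3 (α : ℝ) (hα : 1 / 2 < α) (m : ℕ) (hm : 1 ≤ m) (hmα : α - 1 / 2 < (m : ℝ))
    (μ : ℝ) (hμ : 0 < μ) (t : ℝ) (σ : ℝ) (hσ : σ = 1 ∨ σ = -1)
    (hz : ∀ n : ℤ, (1 / 2 : ℂ) - (α : ℂ) + (t : ℂ) * Complex.I ≠ (n : ℂ)) :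
    ∫ s in Ioi (0 : ℝ),
        (s : ℂ) ^ ((t : ℂ) * Complex.I) * ((s * μ) ^ (1 / 2 - α) : ℝ) *
          (Complex.exp (-(σ : ℂ) * Complex.I * (μ : ℂ) * (s : ℂ)) - 1) ^ m / (s : ℂ)
      = Complex.exp (-(σ : ℂ) * Complex.I * ((π : ℂ) / 2) *
            ((1 / 2 : ℂ) - (α : ℂ) + (t : ℂ) * Complex.I)) *
          (μ : ℂ) ^ (-((t : ℂ) * Complex.I)) *
          Complex.Gamma ((1 / 2 : ℂ) - (α : ℂ) + (t : ℂ) * Complex.I) *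
          ∑ k ∈ Finset.Icc 1 m,
            (m.choose k : ℂ) * (-1) ^ (m - k) *
              (k : ℂ) ^ (-((1 / 2 : ℂ) - (α : ℂ) + (t : ℂ) * Complex.I)) :=
  stmt_3_general α hα m hmα μ hμ t σ hσ hz
end

section
/- Let X be a Banach space with dual X', let (Ω₁, μ₁) and (Ω₂, μ₂) be σ-finite measure spaces, and let K : L²(Ω₁, μ₁) → L²(Ω₂, μ₂) be a bounded linear operator with adjoint K*. Let N : Ω₁ → B(X) and M : Ω₂ → B(X) be families of bounded operators such that for all x ∈ X and x' ∈ X' the function ⟨N(·)x, x'⟩ belongs to L²(Ω₁, μ₁) and ⟨M(·)x, x'⟩ = K(⟨N(·)x, x'⟩) in L²(Ω₂, μ₂). Suppose that for every f ∈ L²(Ω₁, μ₁) there is a bounded operator N_f ∈ B(X) with ⟨N_f x, x'⟩ = ∫_{Ω₁} f(t) ⟨N(t)x, x'⟩ dμ₁(t) for all x ∈ X, x' ∈ X', and that the set {N_f : ‖f‖_{L²(Ω₁)} ≤ 1} is R-bounded with constant C. Then for every g ∈ L²(Ω₂, μ₂) there is a bounded operator M_g ∈ B(X) with ⟨M_g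 x, x'⟩ = ∫_{Ω₂} g(t) ⟨M(t)x, x'⟩ dμ₂(t) for all x ∈ X, x' ∈ X' (namely M_g = N_{K*g}), and the set {M_g : ‖g‖_{L²(Ω₂)} ≤ 1} is R-bounded with constant at most ‖K‖ · C. -/
open MeasureTheory

/-- The Rademacher average `2^(-n) ∑_{ε ∈ {-1,1}^n} ‖∑ i ε_i v_i‖`. -/
noncomputable def radAvg {X : Type*} [NormedAddCommGroup X] (n : ℕ) (v : Fin n → X) : ℝ :=
  ((2 : ℝ) ^ n)⁻¹ * ∑ ε : Fin n → Bool, ‖∑ i, (if ε i then v i else -v i)‖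

def RBounded {X : Type*} [NormedAddCommGroup X] [NormedSpace ℂ X]
    (τ : Set (X →L[ℂ] X)) (C : ℝ) : Prop :=
  ∀ (n : ℕ) (T : Fin n → X →L[ℂ] X), (∀ i, T i ∈ τ) → ∀ x : Fin n → X,
    radAvg n (fun i => T i (x i)) ≤ C * radAvg n x

/-!
For `g ∈ L²(Ω₂)` put `f = conj (K* (conj g))`. Pairing `⟨M(·)x, x'⟩ = K φ` (with
`φ = ⟨N(·)x, x'⟩`) against `g` gives `⟪conj g, K φ⟫ = ⟪K* conj g, φ⟫ = ∫ f φ`, so `M_g = N_f`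
weakly, and `‖f‖ ≤ ‖K‖ ‖g‖`. Hence `{M_g : ‖g‖ ≤ 1}` lies in `‖K‖ • {N_f : ‖f‖ ≤ 1}`, and an
`R`-bound scales by the modulus of the scalar. The degenerate case `K = 0` is handled by
`N_f = 0` for `f = 0` a.e.
-/

open scoped ENNReal NNReal Pointwise InnerProductSpace InnerProduct

lemma radAvg_smul {𝕜 X : Type*} [NormedField 𝕜] [NormedAddCommGroup X] [Module 𝕜 X]
    [NormSMulClass 𝕜 X] (n : ℕ) (c : 𝕜) (v : Fin n → X) :
    radAvg n (fun i => c • v i) = ‖c‖ * radAvg n v := by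
  have hsign : ∀ (b : Bool) (y : X), (if b then c • y else -(c • y)) = c • (if b then y else -y) :=
    fun b y => by cases b <;> simp [smul_neg]
  simp only [radAvg, hsign, ← Finset.smul_sum, norm_smul, ← Finset.mul_sum]
  ring

section RBounded

variable {X : Type*} [NormedAddCommGroup X] [NormedSpace ℂ X]

lemma RBounded.mono {τ τ' : Set (X →L[ℂ] X)} {C : ℝ} (h : RBounded τ C) (hτ : τ' ⊆ τ) :
    RBounded τ' C :=
  fun n T hT x => h n T (fun i => hτ (hT i)) x

lemma RBounded.smul {τ : Set (X →L[ℂ] X)} {C : ℝ} (h : RBounded τ C) (c : ℂ) :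
    RBounded (c • τ) (‖c‖ * C) := by
  intro n T hT x
  choose S hS hST using hT
  calc radAvg n (fun i => T i (x i)) = ‖c‖ * radAvg n (fun i => S i (x i)) := by
        simp only [← hST, smul_apply, radAvg_smul]
    _ ≤ ‖c‖ * (C * radAvg n x) := by gcongr; exact h n S hS x
    _ = ‖c‖ * C * radAvg n x := by ring

end RBounded

section WeakIntegral

variable {X : Type*} [NormedAddCommGroup X] [NormedSpace ℂ X]
  {Ω : Type*} [MeasurableSpace Ω] (μ : Measure Ω) (N : Ω → X →L[ℂ] X)

/-- `T` is the operator `N_f` of the paper. -/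
def IsWeakIntegral (f : Ω → ℂ) (T : X →L[ℂ] X) : Prop :=
  ∀ (x : X) (x' : X →L[ℂ] ℂ), x' (T x) = ∫ t, f t * x' (N t x) ∂μ

def weakIntegralBall (r : ℝ≥0∞) : Set (X →L[ℂ] X) :=
  {T | ∃ f : Ω → ℂ, MemLp f 2 μ ∧ eLpNorm f 2 μ ≤ r ∧ IsWeakIntegral μ N f T}

variable {μ N}

lemma IsWeakIntegral.const_smul {f : Ω → ℂ} {T : X →L[ℂ] X} (h : IsWeakIntegral μ N f T)
    (c : ℂ) : IsWeakIntegral μ N (c • f) (c • T) := by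
  intro x x'
  simp only [smul_apply, map_smul, h x x', Pi.smul_apply, smul_eq_mul,
    mul_assoc, integral_const_mul]

lemma IsWeakIntegral.eq_zero {f : Ω → ℂ} {T : X →L[ℂ] X} (h : IsWeakIntegral μ N f T)
    (hf : f =ᵐ[μ] 0) : T = 0 := by
  ext x
  refine SeparatingDual.eq_zero_of_forall_dual_eq_zero (R := ℂ) fun x' => ?_
  rw [h x x']
  refine integral_eq_zero_of_ae ?_
  filter_upwards [hf] with t ht
  simp [ht]

variable (μ N)

lemma weakIntegralBall_subset_smul (r : ℝ≥0) :
    weakIntegralBall μ N r ⊆ (r : ℂ) • weakIntegralBall μ N 1 := by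
  rintro T ⟨f, hf, hfr, hT⟩
  rcases eq_or_ne r 0 with rfl | hr
  · have hf0 : f =ᵐ[μ] 0 := (eLpNorm_eq_zero_iff hf.1 two_ne_zero).1 (by simpa using hfr)
    refine ⟨0, ⟨0, MemLp.zero, by simp, fun x x' => by simp⟩, ?_⟩
    simp [hT.eq_zero hf0]
  · refine ⟨(r⁻¹ : ℂ) • T, ⟨(r⁻¹ : ℂ) • f, hf.const_smul _, ?_, hT.const_smul _⟩, ?_⟩
    · have hnorm : ‖(r⁻¹ : ℂ)‖ₑ = (r : ℝ≥0∞)⁻¹ := by simp [enorm_eq_nnnorm, hr]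
      calc eLpNorm ((r⁻¹ : ℂ) • f) 2 μ = (r : ℝ≥0∞)⁻¹ * eLpNorm f 2 μ := by
            rw [eLpNorm_const_smul, hnorm]
        _ ≤ (r : ℝ≥0∞)⁻¹ * r := by gcongr
        _ = 1 := ENNReal.inv_mul_cancel (by simpa using hr) ENNReal.coe_ne_top
    · change (r : ℂ) • ((r : ℂ)⁻¹ • T) = T
      rw [smul_smul, mul_inv_cancel₀ (by exact_mod_cast hr), one_smul]

end WeakIntegral

section Transpose

variable {Ω₁ : Type*} [MeasurableSpace Ω₁] {μ₁ : Measure Ω₁}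
  {Ω₂ : Type*} [MeasurableSpace Ω₂] {μ₂ : Measure Ω₂}

lemma exists_transpose (K : Lp ℂ 2 μ₁ →L[ℂ] Lp ℂ 2 μ₂) {g : Ω₂ → ℂ} (hg : MemLp g 2 μ₂) :
    ∃ f : Ω₁ → ℂ, MemLp f 2 μ₁ ∧ eLpNorm f 2 μ₁ ≤ ‖K‖₊ * eLpNorm g 2 μ₂ ∧
      ∀ (u : Ω₁ → ℂ) (hu : MemLp u 2 μ₁),
        ∫ t, f t * u t ∂μ₁ = ∫ t, g t * K (hu.toLp u) t ∂μ₂ := by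
  set G : Lp ℂ 2 μ₂ := hg.star.toLp (star g)
  set φ : Lp ℂ 2 μ₁ := (K†) G
  refine ⟨star ⇑φ, (Lp.memLp φ).star, ?_, fun u hu => ?_⟩
  · calc eLpNorm (star ⇑φ) 2 μ₁ = ‖φ‖ₑ := by rw [eLpNorm_star, Lp.enorm_def]
      _ ≤ ‖K†‖ₑ * ‖G‖ₑ := (K†).le_opENorm G
      _ = ‖K‖₊ * eLpNorm g 2 μ₂ := by
        rw [LinearIsometryEquiv.enorm_map, Lp.enorm_toLp, eLpNorm_star, enorm_eq_nnnorm]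
  · calc ∫ t, (star ⇑φ) t * u t ∂μ₁ = ⟪φ, hu.toLp u⟫_ℂ := by
          rw [L2.inner_def]
          refine integral_congr_ae ?_
          filter_upwards [hu.coeFn_toLp] with t ht
          simp [ht, RCLike.inner_apply, mul_comm]
      _ = ⟪G, K (hu.toLp u)⟫_ℂ := K.adjoint_inner_left _ _
      _ = ∫ t, g t * K (hu.toLp u) t ∂μ₂ := by
          rw [L2.inner_def]
          refine integral_congr_ae ?_
          filter_upwards [hg.star.coeFn_toLp] with t ht
          simp [G, ht, RCLike.inner_apply, mul_comm]

lemma exists_weakIntegral_transpose (K : Lp ℂ 2 μ₁ →L[ℂ] Lp ℂ 2 μ₂)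
    {X : Type*} [NormedAddCommGroup X] [NormedSpace ℂ X]
    {N : Ω₁ → X →L[ℂ] X} {M : Ω₂ → X →L[ℂ] X}
    (hmem : ∀ (x : X) (x' : X →L[ℂ] ℂ), MemLp (fun t => x' (N t x)) 2 μ₁)
    (hKM : ∀ (x : X) (x' : X →L[ℂ] ℂ),
      (fun t => x' (M t x)) =ᵐ[μ₂] ⇑(K (MemLp.toLp _ (hmem x x'))))
    {g : Ω₂ → ℂ} (hg : MemLp g 2 μ₂) :
    ∃ f : Ω₁ → ℂ, MemLp f 2 μ₁ ∧ eLpNorm f 2 μ₁ ≤ ‖K‖₊ * eLpNorm g 2 μ₂ ∧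
      ∀ T, IsWeakIntegral μ₁ N f T ↔ IsWeakIntegral μ₂ M g T := by
  obtain ⟨f, hf, hfg, hpair⟩ := exists_transpose K hg
  have hpairNM : ∀ (x : X) (x' : X →L[ℂ] ℂ),
      ∫ t, f t * x' (N t x) ∂μ₁ = ∫ t, g t * x' (M t x) ∂μ₂ := fun x x' => by
    rw [hpair _ (hmem x x')]
    exact integral_congr_ae (by filter_upwards [hKM x x'] with t ht; rw [ht])
  exact ⟨f, hf, hfg, fun T => forall₂_congr fun x x' => by rw [hpairNM x x']⟩

end Transpose

theorem stmt_17_general {X : Type*} [NormedAddCommGroup X] [NormedSpace ℂ X]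
    {Ω₁ : Type*} [MeasurableSpace Ω₁] (μ₁ : Measure Ω₁)
    {Ω₂ : Type*} [MeasurableSpace Ω₂] (μ₂ : Measure Ω₂)
    (K : Lp ℂ 2 μ₁ →L[ℂ] Lp ℂ 2 μ₂)
    (N : Ω₁ → X →L[ℂ] X) (M : Ω₂ → X →L[ℂ] X)
    (hmem : ∀ (x : X) (x' : X →L[ℂ] ℂ), MemLp (fun t => x' (N t x)) 2 μ₁)
    (hKM : ∀ (x : X) (x' : X →L[ℂ] ℂ),
      (fun t => x' (M t x)) =ᵐ[μ₂] ⇑(K (MemLp.toLp _ (hmem x x'))))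
    (hNf : ∀ f : Ω₁ → ℂ, MemLp f 2 μ₁ → ∃ T : X →L[ℂ] X,
      ∀ (x : X) (x' : X →L[ℂ] ℂ), x' (T x) = ∫ t, f t * x' (N t x) ∂μ₁)
    (C : ℝ)
    (hR : RBounded {T : X →L[ℂ] X | ∃ f : Ω₁ → ℂ, MemLp f 2 μ₁ ∧ eLpNorm f 2 μ₁ ≤ 1 ∧
      ∀ (x : X) (x' : X →L[ℂ] ℂ), x' (T x) = ∫ t, f t * x' (N t x) ∂μ₁} C) :
    (∀ g : Ω₂ → ℂ, MemLp g 2 μ₂ → ∃ T : X →L[ℂ] X,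
      ∀ (x : X) (x' : X →L[ℂ] ℂ), x' (T x) = ∫ t, g t * x' (M t x) ∂μ₂) ∧
    RBounded {T : X →L[ℂ] X | ∃ g : Ω₂ → ℂ, MemLp g 2 μ₂ ∧ eLpNorm g 2 μ₂ ≤ 1 ∧
      ∀ (x : X) (x' : X →L[ℂ] ℂ), x' (T x) = ∫ t, g t * x' (M t x) ∂μ₂} (‖K‖ * C) := by
  have hM := fun g (hg : MemLp g 2 μ₂) => exists_weakIntegral_transpose K hmem hKM hg
  refine ⟨fun g hg => ?_, ?_⟩
  · obtain ⟨f, hf, -, hfg⟩ := hM g hg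
    obtain ⟨T, hT⟩ := hNf f hf
    exact ⟨T, (hfg T).1 hT⟩
  · have hsub : weakIntegralBall μ₂ M 1 ⊆ (‖K‖₊ : ℂ) • weakIntegralBall μ₁ N 1 := by
      rintro T ⟨g, hg, hg1, hT⟩
      obtain ⟨f, hf, hfg, hfgT⟩ := hM g hg
      exact weakIntegralBall_subset_smul μ₁ N ‖K‖₊
        ⟨f, hf, hfg.trans (mul_le_of_le_one_right zero_le hg1), (hfgT T).2 hT⟩
    have hnorm : ‖(‖K‖₊ : ℂ)‖ = ‖K‖ := by simp
    rw [← hnorm]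
    exact (hR.smul _).mono hsub

/-- Let `K : L²(Ω₁,μ₁) → L²(Ω₂,μ₂)` be bounded, and let
`N : Ω₁ → B(X)`, `M : Ω₂ → B(X)` satisfy `⟨N(·)x, x'⟩ ∈ L²(Ω₁)` and
`⟨M(·)x, x'⟩ = K(⟨N(·)x, x'⟩)` in `L²(Ω₂)` for all `x, x'`. If for every `f ∈ L²(Ω₁)` there is
`N_f ∈ B(X)` with `⟨N_f x, x'⟩ = ∫ f(t)⟨N(t)x, x'⟩ dμ₁(t)` and `{N_f : ‖f‖ ≤ 1}` is
`R`-bounded with constant `C`, then for every `g ∈ L²(Ω₂)` there is `M_g ∈ B(X)` with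
`⟨M_g x, x'⟩ = ∫ g(t)⟨M(t)x, x'⟩ dμ₂(t)`, and `{M_g : ‖g‖ ≤ 1}` is `R`-bounded with
constant at most `‖K‖·C`. -/
theorem stmt_17 {X : Type*} [NormedAddCommGroup X] [NormedSpace ℂ X] [CompleteSpace X]
    {Ω₁ : Type*} [MeasurableSpace Ω₁] (μ₁ : Measure Ω₁) [SigmaFinite μ₁]
    {Ω₂ : Type*} [MeasurableSpace Ω₂] (μ₂ : Measure Ω₂) [SigmaFinite μ₂]
    (K : Lp ℂ 2 μ₁ →L[ℂ] Lp ℂ 2 μ₂)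
    (N : Ω₁ → X →L[ℂ] X) (M : Ω₂ → X →L[ℂ] X)
    (hmem : ∀ (x : X) (x' : X →L[ℂ] ℂ), MemLp (fun t => x' (N t x)) 2 μ₁)
    (hKM : ∀ (x : X) (x' : X →L[ℂ] ℂ),
      (fun t => x' (M t x)) =ᵐ[μ₂] ⇑(K (MemLp.toLp _ (hmem x x'))))
    (hNf : ∀ f : Ω₁ → ℂ, MemLp f 2 μ₁ → ∃ T : X →L[ℂ] X,
      ∀ (x : X) (x' : X →L[ℂ] ℂ), x' (T x) = ∫ t, f t * x' (N t x) ∂μ₁)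
    (C : ℝ)
    (hR : RBounded {T : X →L[ℂ] X | ∃ f : Ω₁ → ℂ, MemLp f 2 μ₁ ∧ eLpNorm f 2 μ₁ ≤ 1 ∧
      ∀ (x : X) (x' : X →L[ℂ] ℂ), x' (T x) = ∫ t, f t * x' (N t x) ∂μ₁} C) :
    (∀ g : Ω₂ → ℂ, MemLp g 2 μ₂ → ∃ T : X →L[ℂ] X,
      ∀ (x : X) (x' : X →L[ℂ] ℂ), x' (T x) = ∫ t, g t * x' (M t x) ∂μ₂) ∧
    RBounded {T : X →L[ℂ] X | ∃ g : Ω₂ → ℂ, MemLp g 2 μ₂ ∧ eLpNorm g 2 μ₂ ≤ 1 ∧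
      ∀ (x : X) (x' : X →L[ℂ] ℂ), x' (T x) = ∫ t, g t * x' (M t x) ∂μ₂} (‖K‖ * C) :=
  stmt_17_general μ₁ μ₂ K N M hmem hKM hNf C hR
end
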